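/- Let c be a phase matrix. The following are equivalent: (i) for every unit vector ψ ∈ ℓ²(ℕ,ℂ) and every bounded operator A on ℓ²(ℕ,ℂ) satisfying ⟨e_n, A e_m⟩ = c(m,n)·⟨e_n,ψ⟩·⟨ψ,e_m⟩ for all n, m ∈ ℕ, one has A ∘ A = A; (ii) |c(n,m)| = 1 for all n, m ∈ ℕ. -/

import Mathlib

open scoped ComplexConjugate ComplexOrder

noncomputable section

abbrev H : Type := lp (fun _ : ℕ => ℂ) 2

def e (n : ℕ) : H := lp.single 2 n (1 : ℂ)

def IsPosSemidef (c : ℕ × ℕ → ℂ) : Prop :=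
  ∀ f : ℕ →₀ ℂ, 0 ≤ ∑ n ∈ f.support, ∑ m ∈ f.support, conj (f n) * c (n, m) * f m

def IsPhaseMatrix (c : ℕ × ℕ → ℂ) : Prop :=
  (∀ n, c (n, n) = 1) ∧ IsPosSemidef c

lemma inner_e (n m : ℕ) : @inner ℂ H _ (e n) (e m) = if n = m then 1 else 0 := by
  simp [e, lp.inner_single_left, lp.single_apply, Pi.single_apply]

def bH : HilbertBasis ℕ ℂ H := default

lemma bH_eq (i : ℕ) : bH i = e i := by
  apply bH.repr.injective
  rw [bH.repr_self i]
  have h2 : bH.repr (e i) = e i := rfl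
  rw [h2, e]

lemma vec_ext {x y : H} (h : ∀ n, @inner ℂ H _ (e n) x = @inner ℂ H _ (e n) y) : x = y := by
  apply bH.repr.injective
  ext i
  rw [bH.repr_apply_apply, bH.repr_apply_apply, bH_eq, h]

lemma op_ext {T S : H →L[ℂ] H}
    (h : ∀ n m, @inner ℂ H _ (e n) (T (e m)) = @inner ℂ H _ (e n) (S (e m))) : T = S := by
  have hdense : Dense (Submodule.span ℂ (Set.range e) : Set H) := by
    rw [Submodule.dense_iff_topologicalClosure_eq_top]
    have := bH.dense_span
    rwa [funext bH_eq] at this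
  refine ContinuousLinearMap.ext_on hdense ?_
  rintro x ⟨m, rfl⟩
  exact vec_ext fun n => h n m

lemma parseval (x y : H) :
    ∑' k, (@inner ℂ H _ x (e k)) * (@inner ℂ H _ (e k) y) = @inner ℂ H _ x y := by
  have := bH.tsum_inner_mul_inner x y
  simp only [bH_eq] at this
  exact this

lemma psd_sum {c : ℕ × ℕ → ℂ} (h : IsPosSemidef c) (s : Finset ℕ) (f : ℕ → ℂ)
    (hf : ∀ n, f n ≠ 0 → n ∈ s) :
    0 ≤ ∑ n ∈ s, ∑ m ∈ s, conj (f n) * c (n, m) * f m := by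
  set F : ℕ →₀ ℂ := Finsupp.onFinset s f hf with hF
  have hsub : F.support ⊆ s := Finsupp.support_onFinset_subset
  have h0 := h F
  have e1 : ∑ n ∈ F.support, ∑ m ∈ F.support, conj (F n) * c (n, m) * F m
      = ∑ n ∈ s, ∑ m ∈ s, conj (f n) * c (n, m) * f m := by
    rw [Finset.sum_subset hsub]
    · apply Finset.sum_congr rfl
      intro n _
      rw [Finset.sum_subset hsub]
      · apply Finset.sum_congr rfl; intro m _; rfl
      · intro m _ hm
        have : F m = 0 := Finsupp.notMem_support_iff.mp hm
        simp [this]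
    · intro n _ hn
      have : F n = 0 := Finsupp.notMem_support_iff.mp hn
      simp [this]
  rwa [e1] at h0

lemma psd_pair {c : ℕ × ℕ → ℂ} (h : IsPosSemidef c) {n m : ℕ} (hnm : n ≠ m) (a b : ℂ) :
    0 ≤ conj a * c (n, n) * a + conj a * c (n, m) * b
      + (conj b * c (m, n) * a + conj b * c (m, m) * b) := by
  have := psd_sum h {n, m} (fun x => if x = n then a else if x = m then b else 0)
    (by intro x hx; by_cases h1 : x = n <;> by_cases h2 : x = m <;> simp_all)
  simpa [Finset.sum_pair hnm, hnm, Ne.symm hnm] using this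

lemma herm {c : ℕ × ℕ → ℂ} (hc : IsPhaseMatrix c) (n m : ℕ) : c (m, n) = conj (c (n, m)) := by
  rcases eq_or_ne n m with rfl | hnm
  · rw [hc.1]; simp
  · have h1 := psd_pair hc.2 hnm 1 1
    have h2 := psd_pair hc.2 hnm 1 Complex.I
    rw [hc.1, hc.1] at h1 h2
    simp only [map_one, one_mul, mul_one, Complex.conj_I] at h1 h2
    have i1 := (Complex.le_def.mp h1).2
    have i2 := (Complex.le_def.mp h2).2
    simp only [Complex.add_im, Complex.mul_im, Complex.neg_im, Complex.neg_re,
      Complex.I_re, Complex.I_im, Complex.one_re, Complex.one_im, Complex.zero_im] at i1 i2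
    rw [Complex.ext_iff]
    simp only [Complex.conj_re, Complex.conj_im]
    constructor <;> linarith

lemma unimod {c : ℕ × ℕ → ℂ} (hall : ∀ n m, ‖c (n, m)‖ = 1) (n m : ℕ) :
    c (n, m) * conj (c (n, m)) = 1 := by
  rw [Complex.mul_conj, Complex.normSq_eq_norm_sq, hall]
  norm_num

lemma quad {c : ℕ × ℕ → ℂ} (hc : IsPhaseMatrix c)
    (hall : ∀ n m, ‖c (n, m)‖ = 1) {n k m : ℕ}
    (hnk : n ≠ k) (hnm : n ≠ m) (hkm : k ≠ m) (t : ℂ) :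
    0 ≤ 1 + conj t * (c (n, m) - c (n, k) * c (k, m))
      + t * conj (c (n, m) - c (n, k) * c (k, m)) := by
  set f : ℕ → ℂ := fun x => if x = n then t else if x = k then -t * conj (c (n, k))
    else if x = m then 1 else 0 with hfdef
  have hfn : f n = t := by simp [hfdef]
  have hfk : f k = -t * conj (c (n, k)) := by simp [hfdef, Ne.symm hnk]
  have hfm : f m = 1 := by simp [hfdef, Ne.symm hnm, Ne.symm hkm]
  have hsum3 : ∀ g : ℕ → ℂ, ∑ x ∈ ({n, k, m} : Finset ℕ), g x = g n + (g k + g m) := by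
    intro g
    rw [show ({n, k, m} : Finset ℕ) = insert n (insert k {m}) from rfl,
      Finset.sum_insert (by simp [hnk, hnm]), Finset.sum_insert (by simp [hkm]),
      Finset.sum_singleton]
  have h := psd_sum hc.2 {n, k, m} f (by
    intro x hx
    by_cases h1 : x = n
    · simp [h1]
    by_cases h2 : x = k
    · simp [h2]
    by_cases h3 : x = m
    · simp [h3]
    · exfalso; apply hx; simp [hfdef, h1, h2, h3])
  simp only [hsum3] at h
  rw [hfn, hfk, hfm, hc.1 n, hc.1 k, hc.1 m, herm hc n k, herm hc k m, herm hc n m] at h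
  refine le_of_le_of_eq h ?_
  simp only [map_mul, map_neg, map_one, map_sub, Complex.conj_conj]
  linear_combination (-(conj t * t)) * unimod hall n k

lemma mult {c : ℕ × ℕ → ℂ} (hc : IsPhaseMatrix c)
    (hall : ∀ n m, ‖c (n, m)‖ = 1) (n k m : ℕ) :
    c (n, m) = c (n, k) * c (k, m) := by
  rcases eq_or_ne k n with rfl | hnk
  · rw [hc.1]; ring
  rcases eq_or_ne k m with rfl | hkm
  · rw [hc.1]; ring
  rcases eq_or_ne n m with rfl | hnm
  · rw [hc.1, herm hc n k]; exact (unimod hall n k).symm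
  by_contra hne
  set u : ℂ := c (n, m) - c (n, k) * c (k, m) with hu
  have hu0 : u ≠ 0 := sub_ne_zero.mpr hne
  have hns : (Complex.normSq u : ℂ) ≠ 0 := by
    simpa [Complex.ofReal_eq_zero, Complex.normSq_eq_zero] using hu0
  set t : ℂ := -u / (Complex.normSq u : ℂ) with ht
  have h1 : conj t * u = -1 := by
    rw [ht, map_div₀, map_neg, Complex.conj_ofReal]
    field_simp
    rw [mul_comm, Complex.mul_conj]
  have h2 : t * conj u = -1 := by
    rw [ht]
    field_simp
    rw [Complex.mul_conj]
  have hq := quad hc hall (Ne.symm hnk) hnm hkm t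
  rw [← hu, h1, h2] at hq
  have := (Complex.le_def.mp hq).1
  norm_num at this


def sC : ℂ := (Real.sqrt 2 : ℂ)⁻¹

lemma sC_sq : sC * sC = 2⁻¹ := by
  rw [sC, ← mul_inv, ← Complex.ofReal_mul, Real.mul_self_sqrt (by norm_num : (0:ℝ) ≤ 2)]
  norm_num

lemma sC_conj : conj sC = sC := by
  rw [sC, map_inv₀, Complex.conj_ofReal]

def psi (n m : ℕ) : H := sC • (e n + e m)

lemma inner_e_psi {n m : ℕ} (hnm : n ≠ m) (k : ℕ) :
    @inner ℂ H _ (e k) (psi n m) = if k = n ∨ k = m then sC else 0 := by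
  rw [psi, inner_smul_right, inner_add_right, inner_e, inner_e]
  by_cases h1 : k = n
  · subst h1; simp [hnm]
  · by_cases h2 : k = m
    · subst h2; simp [h1]
    · simp [h1, h2]

lemma inner_psi_e {n m : ℕ} (hnm : n ≠ m) (k : ℕ) :
    @inner ℂ H _ (psi n m) (e k) = if k = n ∨ k = m then sC else 0 := by
  rw [← inner_conj_symm, inner_e_psi hnm]
  split <;> simp [sC_conj]

lemma psi_norm {n m : ℕ} (hnm : n ≠ m) : ‖psi n m‖ = 1 := by
  have hψψ : @inner ℂ H _ (psi n m) (psi n m) = 1 := by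
    rw [show @inner ℂ H _ (psi n m) (psi n m)
        = conj sC * (@inner ℂ H _ (e n) (psi n m) + @inner ℂ H _ (e m) (psi n m)) from by
      rw [psi, inner_smul_left, inner_add_left]]
    rw [inner_e_psi hnm n, inner_e_psi hnm m, if_pos (Or.inl rfl), if_pos (Or.inr rfl), sC_conj]
    linear_combination 2 * sC_sq
  have h2 := inner_self_eq_norm_sq_to_K (𝕜 := ℂ) (E := H) (psi n m)
  rw [hψψ] at h2
  have h3 : (1 : ℝ) = ‖psi n m‖ ^ 2 := by
    rw [← RCLike.ofReal_pow, ← RCLike.ofReal_one (K := ℂ)] at h2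
    exact RCLike.ofReal_inj.mp h2
  nlinarith [norm_nonneg (psi n m)]

def rk (p q : ℕ) : H →L[ℂ] H := (innerSL ℂ (e q)).smulRight (e p)

lemma rk_apply (p q : ℕ) (x : H) : rk p q x = (@inner ℂ H _ (e q) x) • e p := rfl

def opA (c : ℕ × ℕ → ℂ) (n m : ℕ) : H →L[ℂ] H :=
  (2:ℂ)⁻¹ • rk n n + (c (m, n) * 2⁻¹) • rk n m + (c (n, m) * 2⁻¹) • rk m n + (2:ℂ)⁻¹ • rk m m

lemma opA_entry (c : ℕ × ℕ → ℂ) (hc1 : ∀ n, c (n, n) = 1) {n m : ℕ} (hnm : n ≠ m) (p q : ℕ) :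
    @inner ℂ H _ (e p) (opA c n m (e q)) =
      c (q, p) * ((if p = n ∨ p = m then 1 else 0) * (if q = n ∨ q = m then 1 else 0)) * 2⁻¹ := by
  simp only [opA, ContinuousLinearMap.add_apply, ContinuousLinearMap.coe_smul',
    Pi.smul_apply, rk_apply, inner_smul_right, inner_add_right, inner_e, smul_eq_mul]
  by_cases hp1 : p = n <;> by_cases hp2 : p = m <;> by_cases hq1 : q = n <;>
    by_cases hq2 : q = m <;> simp_all [hc1]
  all_goals try ring
  all_goals try exact fun h => hnm h.symm
  all_goals (rw [if_neg (fun h => hq1 h.symm), if_neg (fun h => hq2 h.symm)]; norm_num)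

lemma opA_cond (c : ℕ × ℕ → ℂ) (hc1 : ∀ n, c (n, n) = 1) {n m : ℕ} (hnm : n ≠ m) (p q : ℕ) :
    @inner ℂ H _ (e p) (opA c n m (e q)) =
      c (q, p) * @inner ℂ H _ (e p) (psi n m) * @inner ℂ H _ (psi n m) (e q) := by
  rw [opA_entry c hc1 hnm, inner_e_psi hnm, inner_psi_e hnm]
  split_ifs
  · linear_combination (-(c (q, p))) * sC_sq
  all_goals ring

set_option maxHeartbeats 1000000 in
theorem stmt10 (c : ℕ × ℕ → ℂ) (hc : IsPhaseMatrix c) :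
    (∀ ψ : H, ‖ψ‖ = 1 → ∀ A : H →L[ℂ] H,
      (∀ n m : ℕ, @inner ℂ H _ (e n) (A (e m)) =
        c (m, n) * @inner ℂ H _ (e n) ψ * @inner ℂ H _ ψ (e m)) →
      A ∘L A = A) ↔
    (∀ n m : ℕ, ‖c (n, m)‖ = 1) := by
  constructor
  · intro himp n m
    rcases eq_or_ne n m with rfl | hnm
    · rw [hc.1]; simp
    have hAA := himp (psi n m) (psi_norm hnm) (opA c n m) (opA_cond c hc.1 hnm)
    have hent : @inner ℂ H _ (e n) (opA c n m (opA c n m (e n)))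
        = @inner ℂ H _ (e n) (opA c n m (e n)) := by
      conv_rhs => rw [← hAA]
      rw [ContinuousLinearMap.comp_apply]
    have hL : @inner ℂ H _ (e n) (opA c n m (opA c n m (e n)))
        = ∑' k, (@inner ℂ H _ (e n) (opA c n m (e k)))
            * (@inner ℂ H _ (e k) (opA c n m (e n))) := by
      rw [← ContinuousLinearMap.adjoint_inner_left (opA c n m) (opA c n m (e n)) (e n),
        ← parseval]
      exact tsum_congr fun k => by
        rw [ContinuousLinearMap.adjoint_inner_left (opA c n m) (e k) (e n)]
    have hsupp : ∀ k ∉ ({n, m} : Finset ℕ),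
        (@inner ℂ H _ (e n) (opA c n m (e k)))
          * (@inner ℂ H _ (e k) (opA c n m (e n))) = 0 := by
      intro k hk
      simp only [Finset.mem_insert, Finset.mem_singleton, not_or] at hk
      rw [opA_cond c hc.1 hnm n k, inner_psi_e hnm k, if_neg (by tauto)]
      ring
    rw [tsum_eq_sum hsupp, Finset.sum_pair hnm, hent] at hL
    rw [opA_cond c hc.1 hnm n n, opA_cond c hc.1 hnm n m, opA_cond c hc.1 hnm m n] at hL
    rw [inner_e_psi hnm n, inner_e_psi hnm m, inner_psi_e hnm n, inner_psi_e hnm m] at hL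
    rw [if_pos (show n = n ∨ n = m from Or.inl rfl),
      if_pos (show m = n ∨ m = m from Or.inr rfl), hc.1] at hL
    have h14 : (2:ℂ)⁻¹ = 4⁻¹ + c (m, n) * c (n, m) * 4⁻¹ := by
      calc (2:ℂ)⁻¹ = 1 * sC * sC := by rw [one_mul, sC_sq]
        _ = 1 * sC * sC * (1 * sC * sC) + c (m, n) * sC * sC * (c (n, m) * sC * sC) := hL
        _ = 4⁻¹ + c (m, n) * c (n, m) * 4⁻¹ := by
            linear_combination (1 + c (m, n) * c (n, m)) * (sC * sC + 2⁻¹) * sC_sq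
    have hcc : c (n, m) * conj (c (n, m)) = 1 := by
      rw [← herm hc n m]
      linear_combination (-4 : ℂ) * h14
    have habs : ‖c (n, m)‖^2 = 1 := by
      have h5 : (Complex.normSq (c (n, m)) : ℂ) = 1 := by
        rw [← Complex.mul_conj]; exact hcc
      have h6 : Complex.normSq (c (n, m)) = 1 := by exact_mod_cast h5
      rw [← Complex.normSq_eq_norm_sq, h6]
    nlinarith [norm_nonneg (c (n, m))]
  · intro hall ψ hψ A hA
    apply op_ext
    intro n m
    rw [ContinuousLinearMap.comp_apply]
    have had : ∀ k, @inner ℂ H _ (ContinuousLinearMap.adjoint A (e n)) (e k)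
        = @inner ℂ H _ (e n) (A (e k)) := fun k =>
      ContinuousLinearMap.adjoint_inner_left A (e k) (e n)
    calc @inner ℂ H _ (e n) (A (A (e m)))
        = @inner ℂ H _ (ContinuousLinearMap.adjoint A (e n)) (A (e m)) :=
          (ContinuousLinearMap.adjoint_inner_left A (A (e m)) (e n)).symm
      _ = ∑' k, (@inner ℂ H _ (ContinuousLinearMap.adjoint A (e n)) (e k))
            * (@inner ℂ H _ (e k) (A (e m))) := (parseval _ _).symm
      _ = ∑' k, (c (m, n) * @inner ℂ H _ (e n) ψ * @inner ℂ H _ ψ (e m))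
            * ((@inner ℂ H _ ψ (e k)) * (@inner ℂ H _ (e k) ψ)) := by
          refine tsum_congr fun k => ?_
          rw [had k, hA n k, hA k m]
          rw [show c (m, n) = c (m, k) * c (k, n) from mult hc hall m k n]
          ring
      _ = (c (m, n) * @inner ℂ H _ (e n) ψ * @inner ℂ H _ ψ (e m))
            * ∑' k, ((@inner ℂ H _ ψ (e k)) * (@inner ℂ H _ (e k) ψ)) := by
          rw [tsum_mul_left]
      _ = @inner ℂ H _ (e n) (A (e m)) := by
          rw [parseval ψ ψ, inner_self_eq_norm_sq_to_K, hψ, hA n m]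
          norm_num
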